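/- Norm decomposition with projections: for any matrices B*, B̂ ∈ ℝ^{d₁×d₂}, writing Θ = B̂ − B*, one has ‖B*‖_* − ‖B̂‖_* ≤ ‖P_{B*}(Θ)‖_* − ‖P⊥_{B*}(Θ)‖_*. -/

import Mathlib

/-
Because `P⊥(Θ)` has column and row spaces orthogonal to those of `B*`, the Gram matrices
of `B*` and `P⊥(Θ)` multiply to zero; their square roots then add, so
`‖B* + P⊥(Θ)‖_* = ‖B*‖_* + ‖P⊥(Θ)‖_*`. Since `B* + P⊥(Θ) = B̂ − P(Θ)`, the triangle
inequality finishes the proof. The triangle inequality comes from the duality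
`‖X‖_* = max {tr(Wᵀ X) : Wᵀ W ≤ 1}`: the bound is Cauchy–Schwarz in an eigenbasis of `Xᵀ X`,
and the maximum is attained at `W = X (Xᵀ X)^(-1/2)` with the pseudo-inverse.
-/

noncomputable def frob {d1 d2 : ℕ} (A : Matrix (Fin d1) (Fin d2) ℝ) : ℝ :=
  Real.sqrt (∑ i, ∑ j, (A i j) ^ 2)

noncomputable def nuclearNorm {d1 d2 : ℕ} (A : Matrix (Fin d1) (Fin d2) ℝ) : ℝ :=
  ∑ j, Real.sqrt ((Matrix.isHermitian_conjTranspose_mul_self A).eigenvalues j)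

/-- Matrix of the orthogonal projection onto a subspace of Euclidean space. -/
noncomputable def projMat {d : ℕ} (V : Submodule ℝ (EuclideanSpace ℝ (Fin d))) :
    Matrix (Fin d) (Fin d) ℝ :=
  LinearMap.toMatrix (EuclideanSpace.basisFun (Fin d) ℝ).toBasis
    (EuclideanSpace.basisFun (Fin d) ℝ).toBasis
    (V.subtype ∘ₗ (V.orthogonalProjectionOnto).toLinearMap)

/-- The span of the left singular vectors of `E` (its column space). -/
noncomputable def Vl {d1 d2 : ℕ} (E : Matrix (Fin d1) (Fin d2) ℝ) :
    Submodule ℝ (EuclideanSpace ℝ (Fin d1)) :=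
  LinearMap.range (Matrix.toEuclideanLin E)

/-- The span of the right singular vectors of `E` (its row space). -/
noncomputable def Vr {d1 d2 : ℕ} (E : Matrix (Fin d1) (Fin d2) ℝ) :
    Submodule ℝ (EuclideanSpace ℝ (Fin d2)) :=
  LinearMap.range (Matrix.toEuclideanLin E.transpose)

/-- `P⊥_E(M) = Proj_{V_l(E)^⊥} M Proj_{V_r(E)^⊥}`. -/
noncomputable def Pperp {d1 d2 : ℕ} (E M : Matrix (Fin d1) (Fin d2) ℝ) :
    Matrix (Fin d1) (Fin d2) ℝ :=
  projMat (Vl E)ᗮ * M * projMat (Vr E)ᗮ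

/-- `P_E(M) = M − P⊥_E(M)`. -/
noncomputable def Pproj {d1 d2 : ℕ} (E M : Matrix (Fin d1) (Fin d2) ℝ) :
    Matrix (Fin d1) (Fin d2) ℝ :=
  M - Pperp E M

open scoped MatrixOrder

namespace Matrix

variable {m n : Type*} [Fintype m] [Fintype n]

lemma trace_conjTranspose_mul_le (B C : Matrix m n ℝ) :
    (Bᴴ * C).trace ≤ ∑ j, √((Bᴴ * B) j j) * √((Cᴴ * C) j j) := by
  simp only [trace, diag, mul_apply, conjTranspose_apply, star_trivial, ← sq]
  exact Finset.sum_le_sum fun j _ => Real.sum_mul_le_sqrt_mul_sqrt _ _ _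

variable [DecidableEq n]

lemma IsHermitian.trace_cfc {𝕜 : Type*} [RCLike 𝕜] {A : Matrix n n 𝕜}
    (hA : A.IsHermitian) (f : ℝ → ℝ) : (cfc f A).trace = ∑ i, (f (hA.eigenvalues i) : 𝕜) := by
  rw [hA.cfc_eq, IsHermitian.cfc, Unitary.conjStarAlgAut_apply, trace_mul_cycle,
    Unitary.coe_star_mul_self, one_mul, trace_diagonal]
  rfl

lemma sqrt_mul_sqrt_eq_zero {S T : Matrix n n ℝ} (hS : 0 ≤ S) (hT : 0 ≤ T) (h : S * T = 0) :
    CFC.sqrt S * CFC.sqrt T = 0 := by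
  have hS' : (CFC.sqrt S)ᴴ = CFC.sqrt S := (CFC.sqrt_nonneg S).isSelfAdjoint
  have hT' : (CFC.sqrt T)ᴴ = CFC.sqrt T := (CFC.sqrt_nonneg T).isSelfAdjoint
  rw [← trace_conjTranspose_mul_self_eq_zero_iff, conjTranspose_mul, hS', hT']
  calc (CFC.sqrt T * CFC.sqrt S * (CFC.sqrt S * CFC.sqrt T)).trace
      = (S * (CFC.sqrt T * CFC.sqrt T)).trace := by
        rw [mul_assoc, ← mul_assoc (CFC.sqrt S), CFC.sqrt_mul_sqrt_self S, trace_mul_comm,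
          mul_assoc]
    _ = 0 := by rw [CFC.sqrt_mul_sqrt_self T, h, trace_zero]

lemma sqrt_add_of_mul_eq_zero {S T : Matrix n n ℝ} (hS : 0 ≤ S) (hT : 0 ≤ T) (h : S * T = 0) :
    CFC.sqrt (S + T) = CFC.sqrt S + CFC.sqrt T := by
  have h' : T * S = 0 := by
    simpa [hS.isSelfAdjoint.star_eq, hT.isSelfAdjoint.star_eq] using congrArg star h
  rw [CFC.sqrt_eq_iff _ _ (add_nonneg hS hT)
    (add_nonneg (CFC.sqrt_nonneg S) (CFC.sqrt_nonneg T)), add_mul, mul_add, mul_add,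
    sqrt_mul_sqrt_eq_zero hS hT h, sqrt_mul_sqrt_eq_zero hT hS h', CFC.sqrt_mul_sqrt_self S,
    CFC.sqrt_mul_sqrt_self T, add_zero, zero_add]

end Matrix

open Matrix

section NuclearNorm

variable {d1 d2 : ℕ}

lemma nuclearNorm_eq_trace_sqrt (X : Matrix (Fin d1) (Fin d2) ℝ) :
    nuclearNorm X = (CFC.sqrt (Xᴴ * X)).trace := by
  rw [CFC.sqrt_eq_real_sqrt _ (posSemidef_conjTranspose_mul_self X).nonneg, cfcₙ_eq_cfc,
    (isHermitian_conjTranspose_mul_self X).trace_cfc]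
  rfl

lemma nuclearNorm_congr_gram {d3 : ℕ} {X : Matrix (Fin d1) (Fin d2) ℝ}
    {Y : Matrix (Fin d3) (Fin d2) ℝ} (h : Xᴴ * X = Yᴴ * Y) : nuclearNorm X = nuclearNorm Y := by
  rw [nuclearNorm_eq_trace_sqrt, nuclearNorm_eq_trace_sqrt, h]

lemma nuclearNorm_neg (X : Matrix (Fin d1) (Fin d2) ℝ) : nuclearNorm (-X) = nuclearNorm X :=
  nuclearNorm_congr_gram (by simp)

lemma nuclearNorm_add_of_orthogonal {A N : Matrix (Fin d1) (Fin d2) ℝ} (h₁ : Aᴴ * N = 0)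
    (h₂ : A * Nᴴ = 0) : nuclearNorm (A + N) = nuclearNorm A + nuclearNorm N := by
  have h₁' : Nᴴ * A = 0 := by simpa using congrArg conjTranspose h₁
  have hgram : (A + N)ᴴ * (A + N) = Aᴴ * A + Nᴴ * N := by
    rw [conjTranspose_add, Matrix.add_mul, Matrix.mul_add, Matrix.mul_add, h₁, h₁', add_zero,
      zero_add]
  have hmul : (Aᴴ * A) * (Nᴴ * N) = 0 := by
    rw [Matrix.mul_assoc, ← Matrix.mul_assoc A, h₂, Matrix.zero_mul, Matrix.mul_zero]
  rw [nuclearNorm_eq_trace_sqrt, hgram,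
    sqrt_add_of_mul_eq_zero (posSemidef_conjTranspose_mul_self A).nonneg
      (posSemidef_conjTranspose_mul_self N).nonneg hmul,
    trace_add, ← nuclearNorm_eq_trace_sqrt, ← nuclearNorm_eq_trace_sqrt]

lemma trace_conjTranspose_mul_le_nuclearNorm {W X : Matrix (Fin d1) (Fin d2) ℝ}
    (hW : Wᴴ * W ≤ 1) : (Wᴴ * X).trace ≤ nuclearNorm X := by
  set hA := isHermitian_conjTranspose_mul_self X
  set U : Matrix (Fin d2) (Fin d2) ℝ := (hA.eigenvectorUnitary : Matrix (Fin d2) (Fin d2) ℝ)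
  have hU : U * star U = 1 := Unitary.coe_mul_star_self _
  have hU' : star U * U = 1 := Unitary.coe_star_mul_self _
  have hgramX : (X * U)ᴴ * (X * U) = diagonal hA.eigenvalues := by
    have := hA.conjStarAlgAut_star_eigenvectorUnitary
    rw [Unitary.conjStarAlgAut_star_apply] at this
    rw [conjTranspose_mul, ← star_eq_conjTranspose, Matrix.mul_assoc, ← Matrix.mul_assoc Xᴴ,
      ← Matrix.mul_assoc, this]
    rfl
  have hgramW : ∀ j, ((W * U)ᴴ * (W * U)) j j ≤ 1 := by
    have hle : (W * U)ᴴ * (W * U) ≤ 1 := by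
      rw [conjTranspose_mul, ← star_eq_conjTranspose, Matrix.mul_assoc, ← Matrix.mul_assoc Wᴴ,
        ← Matrix.mul_assoc]
      simpa only [Matrix.mul_one, hU'] using star_left_conjugate_le_conjugate hW U
    intro j
    simpa using (le_iff.mp hle).diag_nonneg (i := j)
  calc (Wᴴ * X).trace = ((W * U)ᴴ * (X * U)).trace := by
        rw [conjTranspose_mul, ← star_eq_conjTranspose, Matrix.mul_assoc,
          ← Matrix.mul_assoc Wᴴ, trace_mul_comm (star U), Matrix.mul_assoc, hU, Matrix.mul_one]
    _ ≤ ∑ j, √(((W * U)ᴴ * (W * U)) j j) * √(((X * U)ᴴ * (X * U)) j j) :=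
        trace_conjTranspose_mul_le _ _
    _ ≤ ∑ j, √(hA.eigenvalues j) := by
        rw [hgramX]
        refine Finset.sum_le_sum fun j _ => ?_
        rw [diagonal_apply_eq]
        exact mul_le_of_le_one_left (Real.sqrt_nonneg _)
          (Real.sqrt_le_one.mpr (hgramW j))
    _ = nuclearNorm X := rfl

lemma exists_trace_conjTranspose_mul_eq_nuclearNorm (X : Matrix (Fin d1) (Fin d2) ℝ) :
    ∃ W : Matrix (Fin d1) (Fin d2) ℝ, Wᴴ * W ≤ 1 ∧ (Wᴴ * X).trace = nuclearNorm X := by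
  set A := Xᴴ * X
  have hA : A.IsHermitian := isHermitian_conjTranspose_mul_self X
  have hcont (f : ℝ → ℝ) : ContinuousOn f (spectrum ℝ A) := finite_real_spectrum.continuousOn f
  -- `(√0)⁻¹ = 0`, so `R` is the pseudo-inverse of `√A`.
  set R := cfc (fun t => (√t)⁻¹) A
  have hR : Rᴴ = R := (cfc_predicate _ A : IsSelfAdjoint R)
  have hRA : R * A = cfc Real.sqrt A := by
    conv_lhs => rw [← cfc_id' ℝ A]
    rw [← cfc_mul _ _ A (hcont _) (hcont _)]
    exact cfc_congr fun t _ => by rw [inv_mul_eq_div, Real.div_sqrt]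
  refine ⟨X * R, ?_, ?_⟩
  · rw [conjTranspose_mul, hR, Matrix.mul_assoc, ← Matrix.mul_assoc Xᴴ, ← Matrix.mul_assoc, hRA,
      ← cfc_mul _ _ A (hcont _) (hcont _)]
    exact cfc_le_one _ A fun t _ => mul_inv_le_one
  · rw [conjTranspose_mul, hR, Matrix.mul_assoc, hRA, hA.trace_cfc]
    rfl

lemma nuclearNorm_add_le (X Y : Matrix (Fin d1) (Fin d2) ℝ) :
    nuclearNorm (X + Y) ≤ nuclearNorm X + nuclearNorm Y := by
  obtain ⟨W, hW, hWXY⟩ := exists_trace_conjTranspose_mul_eq_nuclearNorm (X + Y)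
  rw [← hWXY, Matrix.mul_add, trace_add]
  exact add_le_add (trace_conjTranspose_mul_le_nuclearNorm hW)
    (trace_conjTranspose_mul_le_nuclearNorm hW)

lemma nuclearNorm_sub_le (X Y : Matrix (Fin d1) (Fin d2) ℝ) :
    nuclearNorm (X - Y) ≤ nuclearNorm X + nuclearNorm Y := by
  simpa only [sub_eq_add_neg, nuclearNorm_neg] using nuclearNorm_add_le X (-Y)

end NuclearNorm

section Projection

variable {d d1 d2 : ℕ}

lemma projMat_transpose (V : Submodule ℝ (EuclideanSpace ℝ (Fin d))) :
    (projMat V)ᵀ = projMat V := by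
  have hentry (a b : Fin d) : projMat V a b =
      inner ℝ (EuclideanSpace.single a (1 : ℝ))
        (V.orthogonalProjectionOnto (EuclideanSpace.single b 1) : EuclideanSpace ℝ (Fin d)) := by
    rw [projMat, LinearMap.toMatrix_apply]
    simp [EuclideanSpace.inner_single_left, EuclideanSpace.basisFun_apply]
  ext i j
  rw [transpose_apply, hentry, hentry, ← Submodule.starProjection_apply,
    ← Submodule.starProjection_apply, ← Submodule.inner_starProjection_left_eq_right,
    real_inner_comm]

lemma projMat_mul_eq_zero {V : Submodule ℝ (EuclideanSpace ℝ (Fin d))}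
    {E : Matrix (Fin d) (Fin d2) ℝ} (hE : LinearMap.range (toEuclideanLin E) ≤ Vᗮ) :
    projMat V * E = 0 := by
  have hcomp : (V.subtype ∘ₗ V.orthogonalProjectionOnto.toLinearMap) ∘ₗ toEuclideanLin E = 0 :=
    LinearMap.ext fun x => by
      simp [Submodule.orthogonalProjectionOnto_apply_of_mem_orthogonal
        (hE (LinearMap.mem_range_self _ x))]
  rw [← (LinearMap.toMatrix_toLin (EuclideanSpace.basisFun (Fin d2) ℝ).toBasis
      (EuclideanSpace.basisFun (Fin d) ℝ).toBasis E), projMat, ← LinearMap.toMatrix_comp]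
  exact (congrArg _ hcomp).trans (map_zero _)

lemma projMat_orthogonal_Vl_mul (E : Matrix (Fin d1) (Fin d2) ℝ) : projMat (Vl E)ᗮ * E = 0 :=
  projMat_mul_eq_zero (Vl E).le_orthogonal_orthogonal

lemma conjTranspose_mul_Pperp (E M : Matrix (Fin d1) (Fin d2) ℝ) : Eᴴ * Pperp E M = 0 := by
  have h : Eᴴ * projMat (Vl E)ᗮ = 0 := by
    simpa [transpose_mul, projMat_transpose, conjTranspose_eq_transpose_of_trivial] using
      congrArg transpose (projMat_orthogonal_Vl_mul E)
  rw [Pperp, ← Matrix.mul_assoc, ← Matrix.mul_assoc, h, Matrix.zero_mul, Matrix.zero_mul]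

lemma mul_conjTranspose_Pperp (E M : Matrix (Fin d1) (Fin d2) ℝ) : E * (Pperp E M)ᴴ = 0 := by
  have h : E * projMat (Vr E)ᗮ = 0 := by
    rw [show Vr E = Vl Eᵀ from rfl]
    simpa [transpose_mul, projMat_transpose] using
      congrArg transpose (projMat_orthogonal_Vl_mul Eᵀ)
  rw [Pperp, conjTranspose_mul, conjTranspose_eq_transpose_of_trivial (projMat _),
    projMat_transpose, ← Matrix.mul_assoc, h, Matrix.zero_mul]

end Projection

/-- Norm decomposition with projections:
`‖B*‖_* − ‖B̂‖_* ≤ ‖P_{B*}(Θ)‖_* − ‖P⊥_{B*}(Θ)‖_*` for `Θ = B̂ − B*`. -/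
theorem nuclear_norm_decomposition {d1 d2 : ℕ} (Bstar Bhat : Matrix (Fin d1) (Fin d2) ℝ) :
    nuclearNorm Bstar - nuclearNorm Bhat ≤
      nuclearNorm (Pproj Bstar (Bhat - Bstar)) -
        nuclearNorm (Pperp Bstar (Bhat - Bstar)) := by
  set Θ := Bhat - Bstar with hΘ
  have hsplit : Bstar + Pperp Bstar Θ = Bhat - Pproj Bstar Θ := by
    rw [Pproj, hΘ]
    abel
  have hadd : nuclearNorm (Bstar + Pperp Bstar Θ) =
      nuclearNorm Bstar + nuclearNorm (Pperp Bstar Θ) :=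
    nuclearNorm_add_of_orthogonal (conjTranspose_mul_Pperp Bstar Θ)
      (mul_conjTranspose_Pperp Bstar Θ)
  have htri := nuclearNorm_sub_le Bhat (Pproj Bstar Θ)
  rw [← hsplit, hadd] at htri
  linarith
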